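/- arXiv:2208.03810 — 2 statements merged into one kernel-verified Lean document; each statement's English description precedes it below -/
import Mathlib

section
/- Let f : {0,1}^n → {0,1} be a monotone read-once DNF with m terms each containing exactly n/m variables (so every variable appears in exactly one term). Under unit costs and an arbitrary probability vector p ∈ (0,1)^n, there is a non-adaptive strategy S whose expected cost is at most m · OPT_A(f, unit costs, p). -/
/-!
For each term `T j` choose, by dynamic programming (`searchCost`), an order `σ j` of its variables
minimising the expected number of tests needed to find a zero of `T j`, counted on the inputs where
`T j` has one. The non-adaptive strategy tests the lists `σ j` round robin.

On a one of `f` it pays at most `n = m · (n / m)`, while every decision tree computing `f` reads a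
whole term, that is at least `n / m` variables. On a zero of `f` it stops after at most `m · ∑ⱼ dⱼ`
tests, where `dⱼ` is the position of the first zero in `σ j`. Conditioned on the variables outside
`T j`, a decision tree computing `f` must find a zero of `T j` whenever the other terms are already
falsified, so on the zeros of `f` it makes in expectation at least `E[dⱼ]` queries inside `T j`.
Summing over `j` gives the factor `m`.
-/

open Finset

/-- The set of tested indices `T` determines `f` on input `x`:
every input agreeing with `x` on `T` gives the same function value. -/
def Determines (n : ℕ) (f : (Fin n → Bool) → Bool) (T : Finset (Fin n))
    (x : Fin n → Bool) : Prop :=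
  ∀ x' : Fin n → Bool, (∀ i ∈ T, x' i = x i) → f x' = f x

/-- The set of indices tested by the non-adaptive strategy `π` in its first `k` tests. -/
def prefixSet (n : ℕ) (π : Equiv.Perm (Fin n)) (k : ℕ) : Finset (Fin n) :=
  Finset.univ.filter (fun i => (π.symm i).val < k)

/-- The number of tests performed by the non-adaptive strategy `π` on input `x`:
the least `k` such that the first `k` tested indices determine `f` on `x`. -/
noncomputable def naSteps (n : ℕ) (f : (Fin n → Bool) → Bool)
    (π : Equiv.Perm (Fin n)) (x : Fin n → Bool) : ℕ :=
  sInf {k : ℕ | Determines n f (prefixSet n π k) x}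

/-- The cost incurred by the non-adaptive strategy `π` on input `x`, with cost vector `c`. -/
noncomputable def naCost (n : ℕ) (f : (Fin n → Bool) → Bool) (c : Fin n → ℝ)
    (π : Equiv.Perm (Fin n)) (x : Fin n → Bool) : ℝ :=
  ∑ i ∈ prefixSet n π (naSteps n f π x), c i

/-- Probability of the outcome `x` under the product distribution with parameters `p`. -/
def prodWeight (n : ℕ) (p : Fin n → ℝ) (x : Fin n → Bool) : ℝ :=
  ∏ i : Fin n, if x i then p i else 1 - p i

/-- Expected cost of the non-adaptive strategy `π`. -/
noncomputable def naExpCost (n : ℕ) (f : (Fin n → Bool) → Bool) (c : Fin n → ℝ)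
    (p : Fin n → ℝ) (π : Equiv.Perm (Fin n)) : ℝ :=
  ∑ x : Fin n → Bool, prodWeight n p x * naCost n f c π x

/-- Optimal expected cost among non-adaptive strategies. -/
noncomputable def OPTN (n : ℕ) (f : (Fin n → Bool) → Bool) (c : Fin n → ℝ)
    (p : Fin n → ℝ) : ℝ :=
  sInf { r : ℝ | ∃ π : Equiv.Perm (Fin n), r = naExpCost n f c p π }

/-- Binary decision trees over `n` variables (adaptive strategies). -/
inductive DecTree (n : ℕ) : Type
  | leaf : Bool → DecTree n
  | node : Fin n → DecTree n → DecTree n → DecTree n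

/-- Evaluation of a decision tree on an input. -/
def DecTree.eval {n : ℕ} : DecTree n → (Fin n → Bool) → Bool
  | .leaf b, _ => b
  | .node i t0 t1, x => if x i then DecTree.eval t1 x else DecTree.eval t0 x

/-- Cost of a decision tree on input `x`: the sum of the costs of the indices
labeling the internal nodes on the root-to-leaf path followed on `x`. -/
def DecTree.costOn {n : ℕ} (c : Fin n → ℝ) : DecTree n → (Fin n → Bool) → ℝ
  | .leaf _, _ => 0
  | .node i t0 t1, x =>
      c i + (if x i then DecTree.costOn c t1 x else DecTree.costOn c t0 x)

/-- The decision tree `t` computes the function `f`. -/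
def DecTree.Computes {n : ℕ} (t : DecTree n) (f : (Fin n → Bool) → Bool) : Prop :=
  ∀ x, t.eval x = f x

/-- Expected cost of an adaptive strategy (decision tree). -/
noncomputable def adExpCost (n : ℕ) (c : Fin n → ℝ) (p : Fin n → ℝ)
    (t : DecTree n) : ℝ :=
  ∑ x : Fin n → Bool, prodWeight n p x * DecTree.costOn c t x

/-- Optimal expected cost among adaptive strategies computing `f`. -/
noncomputable def OPTA (n : ℕ) (f : (Fin n → Bool) → Bool) (c : Fin n → ℝ)
    (p : Fin n → ℝ) : ℝ :=
  sInf { r : ℝ | ∃ t : DecTree n, DecTree.Computes t f ∧ r = adExpCost n c p t }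

/-- `f` is the monotone read-once DNF whose terms are the (nonempty, pairwise disjoint)
sets of variables `T 0, …, T (m-1)`. -/
def IsReadOnceDNF (n m : ℕ) (T : Fin m → Finset (Fin n))
    (f : (Fin n → Bool) → Bool) : Prop :=
  (∀ j, (T j).Nonempty) ∧
  (∀ j k, j ≠ k → Disjoint (T j) (T k)) ∧
  (∀ x, f x = true ↔ ∃ j, ∀ i ∈ T j, x i = true)

open Function

namespace DecTree

variable {n : ℕ}

def path : DecTree n → (Fin n → Bool) → List (Fin n)
  | .leaf _, _ => []
  | .node i t0 t1, x => i :: if x i then path t1 x else path t0 x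

lemma eval_eq_of_forall_mem_path {t : DecTree n} {x x' : Fin n → Bool}
    (h : ∀ i ∈ t.path x, x' i = x i) : t.eval x' = t.eval x := by
  induction t with
  | leaf => rfl
  | node i t0 t1 ih0 ih1 =>
    simp only [path, List.mem_cons, forall_eq_or_imp] at h
    cases hxi : x i <;> simp only [hxi, eval, h.1] at h ⊢
    exacts [ih0 h.2, ih1 h.2]

lemma Computes.determines {t : DecTree n} {f : (Fin n → Bool) → Bool} (ht : t.Computes f)
    (x : Fin n → Bool) : Determines n f (t.path x).toFinset x := fun x' hx' => by
  rw [← ht, ← ht]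
  exact eval_eq_of_forall_mem_path (by simpa using hx')

lemma costOn_eq_sum_map_path (c : Fin n → ℝ) (t : DecTree n) (x : Fin n → Bool) :
    t.costOn c x = ((t.path x).map c).sum := by
  induction t with
  | leaf => rfl
  | node i t0 t1 ih0 ih1 => cases hxi : x i <;> simp [costOn, path, hxi, ih0, ih1]

lemma exists_computes_of_forall_eqOn (l : List (Fin n)) :
    ∀ g : (Fin n → Bool) → Bool, (∀ x x', (∀ i ∈ l, x i = x' i) → g x = g x') →
      ∃ t : DecTree n, t.Computes g := by
  induction l with
  | nil => exact fun g hg => ⟨.leaf (g fun _ => false), fun x => hg _ _ (by simp)⟩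
  | cons a l ih =>
    intro g hg
    have hb (b : Bool) : ∃ t : DecTree n, t.Computes fun x => g (update x a b) :=
      ih _ fun x x' h => hg _ _ fun i hi => by
        by_cases hia : i = a
        · simp [hia]
        · simpa [hia] using h i ((List.mem_cons.mp hi).resolve_left hia)
    obtain ⟨t0, h0⟩ := hb false
    obtain ⟨t1, h1⟩ := hb true
    refine ⟨.node a t0 t1, fun x => ?_⟩
    cases hxa : x a <;> simp only [eval, hxa, h0 x, h1 x, Bool.false_eq_true, if_true, if_false] <;>
      rw [← hxa, update_eq_self]

lemma exists_computes (f : (Fin n → Bool) → Bool) : ∃ t : DecTree n, t.Computes f :=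
  exists_computes_of_forall_eqOn (List.finRange n) f fun _ _ h =>
    congrArg f (funext fun i => h i (List.mem_finRange i))

def queriesIn (S : Finset (Fin n)) (t : DecTree n) (x : Fin n → Bool) : ℕ :=
  (t.path x).countP (· ∈ S)

end DecTree

lemma List.sum_countP_mem_eq_length {α ι : Type*} [Fintype ι] [DecidableEq α]
    (T : ι → Finset α) (hT : ∀ a, ∃! j, a ∈ T j) (l : List α) :
    ∑ j, l.countP (· ∈ T j) = l.length := by
  induction l with
  | nil => simp
  | cons a l ih =>
    obtain ⟨j₀, hj₀, huniq⟩ := hT a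
    simp only [List.countP_cons, sum_add_distrib, ih, List.length_cons, decide_eq_true_eq]
    rw [Fintype.sum_eq_single j₀ fun j hj => if_neg fun h => hj (huniq j h), if_pos hj₀]

section Expectation

variable {n : ℕ} (p : Fin n → ℝ)

def prodWeightOn (S : Finset (Fin n)) (x : Fin n → Bool) : ℝ :=
  ∏ i ∈ S, if x i then p i else 1 - p i

def agreeOutside (S : Finset (Fin n)) (y : Fin n → Bool) : Finset (Fin n → Bool) :=
  univ.filter fun x => ∀ i ∉ S, x i = y i

/-- The conditional expectation of `g` given that the coordinates outside `S` are those of `y`. -/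
def expectOn (S : Finset (Fin n)) (y : Fin n → Bool) (g : (Fin n → Bool) → ℝ) : ℝ :=
  ∑ x ∈ agreeOutside S y, prodWeightOn p S x * g x

@[simp]
lemma mem_agreeOutside {S : Finset (Fin n)} {x y : Fin n → Bool} :
    x ∈ agreeOutside S y ↔ ∀ i ∉ S, x i = y i := by
  simp [agreeOutside]

variable {p}

lemma prodWeightOn_nonneg (hp : ∀ i, 0 ≤ p i ∧ p i ≤ 1) (S : Finset (Fin n))
    (x : Fin n → Bool) : 0 ≤ prodWeightOn p S x :=
  prod_nonneg fun i _ => by split <;> linarith [hp i]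

lemma expectOn_congr {S : Finset (Fin n)} {y : Fin n → Bool} {g g' : (Fin n → Bool) → ℝ}
    (h : ∀ x ∈ agreeOutside S y, g x = g' x) : expectOn p S y g = expectOn p S y g' :=
  sum_congr rfl fun x hx => by rw [h x hx]

lemma expectOn_mono (hp : ∀ i, 0 ≤ p i ∧ p i ≤ 1) {S : Finset (Fin n)} {y : Fin n → Bool}
    {g g' : (Fin n → Bool) → ℝ} (h : ∀ x ∈ agreeOutside S y, g x ≤ g' x) :
    expectOn p S y g ≤ expectOn p S y g' :=
  sum_le_sum fun x hx => mul_le_mul_of_nonneg_left (h x hx) (prodWeightOn_nonneg hp S x)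

lemma expectOn_add (S : Finset (Fin n)) (y : Fin n → Bool) (g g' : (Fin n → Bool) → ℝ) :
    expectOn p S y (g + g') = expectOn p S y g + expectOn p S y g' := by
  simp only [expectOn, Pi.add_apply, mul_add, sum_add_distrib]

lemma expectOn_empty (y : Fin n → Bool) (g : (Fin n → Bool) → ℝ) :
    expectOn p ∅ y g = g y := by
  have : agreeOutside ∅ y = {y} := by ext x; simp [funext_iff]
  simp [expectOn, this, prodWeightOn]

lemma expectOn_of_mem {S : Finset (Fin n)} {a : Fin n} (ha : a ∈ S) (y : Fin n → Bool)
    (g : (Fin n → Bool) → ℝ) :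
    expectOn p S y g = (1 - p a) * expectOn p (S.erase a) (update y a false) g
      + p a * expectOn p (S.erase a) (update y a true) g := by
  have hfiber (b : Bool) :
      (agreeOutside S y).filter (fun x => x a = b) = agreeOutside (S.erase a) (update y a b) := by
    ext x
    simp only [mem_filter, mem_agreeOutside, mem_erase, not_and]
    constructor
    · rintro ⟨hx, rfl⟩ i hi
      by_cases hia : i = a
      · simp [hia]
      · simpa [hia] using hx i (hi hia)
    · intro hx
      refine ⟨fun i hi => ?_, by simpa using hx a (by simp)⟩
      have hia : i ≠ a := fun h => hi (h ▸ ha)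
      simpa [hia] using hx i fun _ => hi
  have hsplit (b : Bool) : ∑ x ∈ agreeOutside S y with x a = b, prodWeightOn p S x * g x
      = (if b then p a else 1 - p a) * expectOn p (S.erase a) (update y a b) g := by
    rw [hfiber, expectOn, mul_sum]
    refine sum_congr rfl fun x hx => ?_
    have hxa : x a = b := by simpa using (mem_agreeOutside.mp hx) a (by simp)
    rw [prodWeightOn, ← mul_prod_erase S _ ha, hxa, prodWeightOn, mul_assoc]
  rw [expectOn, ← sum_fiberwise (agreeOutside S y) (fun x => x a), Fintype.sum_bool,
    hsplit, hsplit]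
  simp only [if_true, Bool.false_eq_true, if_false]
  ring

lemma expectOn_const (S : Finset (Fin n)) (y : Fin n → Bool) (c : ℝ) :
    expectOn p S y (fun _ => c) = c := by
  induction S using Finset.induction_on generalizing y with
  | empty => exact expectOn_empty y _
  | insert a s ha ih =>
    rw [expectOn_of_mem (mem_insert_self a s), erase_insert ha, ih, ih]
    ring

lemma prodWeightOn_eq_of_mem_agreeOutside {S : Finset (Fin n)} {x y : Fin n → Bool}
    (h : x ∈ agreeOutside S y) : prodWeightOn p Sᶜ x = prodWeightOn p Sᶜ y :=
  prod_congr rfl fun i hi => by rw [mem_agreeOutside.mp h i (mem_compl.mp hi)]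

lemma sum_prodWeight_mul_eq_sum_expectOn (S : Finset (Fin n)) (g : (Fin n → Bool) → ℝ) :
    ∑ x, prodWeight n p x * g x = ∑ y, prodWeight n p y * expectOn p S y g := by
  have hweight (x : Fin n → Bool) : prodWeight n p x = prodWeightOn p S x * prodWeightOn p Sᶜ x :=
    (prod_mul_prod_compl S _).symm
  have hfiber (x : Fin n → Bool) :
      ∑ y ∈ agreeOutside S x, prodWeight n p y = prodWeightOn p Sᶜ x := by
    calc ∑ y ∈ agreeOutside S x, prodWeight n p y
        = prodWeightOn p Sᶜ x * expectOn p S x (fun _ => 1) := by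
          rw [expectOn, mul_sum]
          refine sum_congr rfl fun y hy => ?_
          rw [hweight, prodWeightOn_eq_of_mem_agreeOutside hy]
          ring
      _ = prodWeightOn p Sᶜ x := by rw [expectOn_const, mul_one]
  have hsymm (x y : Fin n → Bool) : y ∈ agreeOutside S x ↔ x ∈ agreeOutside S y := by
    simp only [mem_agreeOutside]
    exact forall₂_congr fun _ _ => eq_comm
  calc ∑ x, prodWeight n p x * g x
      = ∑ x, (∑ y ∈ agreeOutside S x, prodWeight n p y) * (prodWeightOn p S x * g x) := by
        refine sum_congr rfl fun x _ => ?_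
        rw [hfiber, hweight]
        ring
    _ = ∑ y, prodWeight n p y * expectOn p S y g := by
        simp only [sum_mul, expectOn, mul_sum]
        exact sum_comm' fun x y => by simp only [mem_univ, true_and, and_true, hsymm]

lemma sum_prodWeight_mul_le_of_forall_expectOn_le (hp : ∀ i, 0 ≤ p i ∧ p i ≤ 1)
    (S : Finset (Fin n)) {g g' : (Fin n → Bool) → ℝ}
    (h : ∀ y, expectOn p S y g ≤ expectOn p S y g') :
    ∑ x, prodWeight n p x * g x ≤ ∑ x, prodWeight n p x * g' x := by
  rw [sum_prodWeight_mul_eq_sum_expectOn S g, sum_prodWeight_mul_eq_sum_expectOn S g']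
  exact sum_le_sum fun y _ => mul_le_mul_of_nonneg_left (h y) (prodWeightOn_nonneg hp univ y)

end Expectation

section ZeroSearch

variable {n : ℕ}

def zeroInd (S : Finset (Fin n)) (x : Fin n → Bool) : ℝ :=
  if ∃ i ∈ S, x i = false then 1 else 0

lemma zeroInd_nonneg (S : Finset (Fin n)) (x : Fin n → Bool) : 0 ≤ zeroInd S x := by
  unfold zeroInd
  split <;> norm_num

lemma zeroInd_of_eq_false {S : Finset (Fin n)} {a : Fin n} (ha : a ∈ S) {x : Fin n → Bool}
    (hxa : x a = false) : zeroInd S x = 1 :=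
  if_pos ⟨a, ha, hxa⟩

lemma zeroInd_erase_of_eq_true (S : Finset (Fin n)) {a : Fin n} {x : Fin n → Bool}
    (hxa : x a = true) : zeroInd (S.erase a) x = zeroInd S x := by
  refine if_congr ⟨fun ⟨i, hi, hxi⟩ => ⟨i, mem_of_mem_erase hi, hxi⟩, fun ⟨i, hi, hxi⟩ => ?_⟩ rfl rfl
  exact ⟨i, mem_erase.mpr ⟨fun h => by simp [h, hxa] at hxi, hi⟩, hxi⟩

lemma apply_eq_of_mem_agreeOutside_update {S : Finset (Fin n)} {y x : Fin n → Bool}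
    {a : Fin n} {b : Bool} (ha : a ∉ S) (hx : x ∈ agreeOutside S (update y a b)) : x a = b := by
  simpa using mem_agreeOutside.mp hx a ha

variable {p : Fin n → ℝ}

lemma expectOn_zeroInd (S : Finset (Fin n)) (y : Fin n → Bool) :
    expectOn p S y (zeroInd S) = 1 - ∏ i ∈ S, p i := by
  induction S using Finset.strongInduction generalizing y with
  | H S ih =>
    rcases S.eq_empty_or_nonempty with rfl | ⟨a, ha⟩
    · simp [expectOn_empty, zeroInd]
    have hfalse : expectOn p (S.erase a) (update y a false) (zeroInd S) = 1 := by
      rw [expectOn_congr fun x hx => zeroInd_of_eq_false ha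
        (apply_eq_of_mem_agreeOutside_update (notMem_erase a S) hx), expectOn_const]
    have htrue : expectOn p (S.erase a) (update y a true) (zeroInd S)
        = 1 - ∏ i ∈ S.erase a, p i := by
      rw [← ih _ (erase_ssubset ha)]
      exact expectOn_congr fun x hx => (zeroInd_erase_of_eq_true S
        (apply_eq_of_mem_agreeOutside_update (notMem_erase a S) hx)).symm
    rw [expectOn_of_mem ha, hfalse, htrue, ← mul_prod_erase S p ha]
    ring

variable (p) in
/-- The least expected number of tests, counted on the inputs with a zero in `S`, needed to find
a zero of `S` by testing its variables one by one: the first test is paid exactly when `S` has a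
zero, and after testing `i` the search goes on in `S.erase i` when `x i = true`. -/
noncomputable def searchCost (S : Finset (Fin n)) : ℝ :=
  if h : S.Nonempty then
    S.attach.inf' (attach_nonempty_iff.mpr h) fun i =>
      (1 - ∏ l ∈ S, p l) + p i * searchCost (S.erase i)
  else 0
termination_by S.card
decreasing_by exact card_erase_lt_of_mem i.2

lemma searchCost_empty : searchCost p ∅ = 0 := by
  rw [searchCost, dif_neg Finset.not_nonempty_empty]

lemma searchCost_le {S : Finset (Fin n)} {i : Fin n} (hi : i ∈ S) :
    searchCost p S ≤ (1 - ∏ l ∈ S, p l) + p i * searchCost p (S.erase i) := by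
  rw [searchCost, dif_pos ⟨i, hi⟩]
  exact inf'_le (fun i : S => (1 - ∏ l ∈ S, p l) + p i * searchCost p (S.erase i))
    (mem_attach S ⟨i, hi⟩)

lemma exists_searchCost_eq {S : Finset (Fin n)} (h : S.Nonempty) :
    ∃ i ∈ S, searchCost p S = (1 - ∏ l ∈ S, p l) + p i * searchCost p (S.erase i) := by
  rw [searchCost, dif_pos h]
  obtain ⟨i, -, hi⟩ := exists_mem_eq_inf' (attach_nonempty_iff.mpr h)
    fun i : S => (1 - ∏ l ∈ S, p l) + p i * searchCost p (S.erase i)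
  exact ⟨i, i.2, hi⟩

variable (p) in
noncomputable def searchHead {S : Finset (Fin n)} (h : S.Nonempty) : Fin n :=
  (exists_searchCost_eq (p := p) h).choose

lemma searchHead_mem {S : Finset (Fin n)} (h : S.Nonempty) : searchHead p h ∈ S :=
  (exists_searchCost_eq h).choose_spec.1

lemma searchCost_eq_searchHead {S : Finset (Fin n)} (h : S.Nonempty) :
    searchCost p S = (1 - ∏ l ∈ S, p l)
      + p (searchHead p h) * searchCost p (S.erase (searchHead p h)) :=
  (exists_searchCost_eq h).choose_spec.2

variable (p) in
noncomputable def searchOrder (S : Finset (Fin n)) : List (Fin n) :=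
  if h : S.Nonempty then
    searchHead p h :: searchOrder (S.erase (searchHead p h))
  else []
termination_by S.card
decreasing_by exact card_erase_lt_of_mem (searchHead_mem h)

lemma mem_searchOrder {S : Finset (Fin n)} {i : Fin n} : i ∈ searchOrder p S ↔ i ∈ S := by
  induction S using Finset.strongInduction with
  | H S ih =>
    rw [searchOrder]
    split_ifs with h
    · rw [List.mem_cons, ih _ (erase_ssubset (searchHead_mem h)), mem_erase]
      constructor
      · rintro (rfl | ⟨-, hi⟩)
        exacts [searchHead_mem h, hi]
      · intro hi
        exact or_iff_not_imp_left.mpr fun hne => ⟨hne, hi⟩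
    · simp [not_nonempty_iff_eq_empty.mp h]

def firstZero {α : Type*} : List α → (α → Bool) → ℕ
  | [], _ => 0
  | i :: l, x => if x i then firstZero l x + 1 else 1

lemma exists_idxOf_lt_firstZero {α : Type*} [DecidableEq α] {x : α → Bool} :
    ∀ {l : List α}, (∃ i ∈ l, x i = false) → ∃ i ∈ l, x i = false ∧ l.idxOf i < firstZero l x
  | [], ⟨_, hi, _⟩ => absurd hi List.not_mem_nil
  | a :: l, ⟨i, hi, hxi⟩ => by
    cases hxa : x a
    · exact ⟨a, List.mem_cons_self, hxa, by simp [firstZero, hxa]⟩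
    · have hil : i ∈ l := (List.mem_cons.mp hi).resolve_left fun h => by simp_all
      obtain ⟨k, hk, hxk, hlt⟩ := exists_idxOf_lt_firstZero ⟨i, hil, hxi⟩
      have hka : a ≠ k := fun h => by simp_all
      refine ⟨k, List.mem_cons_of_mem a hk, hxk, ?_⟩
      rw [List.idxOf_cons_ne l hka]
      simpa [firstZero, hxa] using hlt

lemma expectOn_zeroInd_mul_firstZero_searchOrder (S : Finset (Fin n)) (y : Fin n → Bool) :
    expectOn p S y (fun x => zeroInd S x * firstZero (searchOrder p S) x) = searchCost p S := by
  induction S using Finset.strongInduction generalizing y with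
  | H S ih =>
    rcases S.eq_empty_or_nonempty with rfl | h
    · simp [searchOrder, firstZero, searchCost_empty, expectOn_const]
    set a := searchHead p h
    have ha : a ∈ S := searchHead_mem h
    have hfalse : expectOn p (S.erase a) (update y a false)
        (fun x => zeroInd S x * firstZero (searchOrder p S) x) = 1 := by
      rw [← expectOn_const (p := p) (S.erase a) (update y a false) 1]
      refine expectOn_congr fun x hx => ?_
      have hxa := apply_eq_of_mem_agreeOutside_update (notMem_erase a S) hx
      rw [zeroInd_of_eq_false ha hxa, searchOrder, dif_pos h]
      simp [firstZero, a, hxa]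
    have htrue : expectOn p (S.erase a) (update y a true)
        (fun x => zeroInd S x * firstZero (searchOrder p S) x)
        = (1 - ∏ i ∈ S.erase a, p i) + searchCost p (S.erase a) := by
      rw [← expectOn_zeroInd (S.erase a) (update y a true), ← ih _ (erase_ssubset ha),
        ← expectOn_add]
      refine expectOn_congr fun x hx => ?_
      have hxa := apply_eq_of_mem_agreeOutside_update (notMem_erase a S) hx
      rw [searchOrder, dif_pos h, ← zeroInd_erase_of_eq_true S hxa]
      simp only [firstZero, hxa, if_true, a, Pi.add_apply]
      push_cast
      ring
    rw [expectOn_of_mem ha, hfalse, htrue, searchCost_eq_searchHead h, ← mul_prod_erase S p ha]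
    ring

end ZeroSearch

section TreeLowerBound

variable {n : ℕ} {p : Fin n → ℝ}

lemma DecTree.queriesIn_node (S : Finset (Fin n)) (i : Fin n) (t0 t1 : DecTree n)
    (x : Fin n → Bool) : (DecTree.node i t0 t1).queriesIn S x
      = (if x i then t1 else t0).queriesIn S x + if i ∈ S then 1 else 0 := by
  cases hxi : x i <;> simp [DecTree.queriesIn, DecTree.path, List.countP_cons, hxi]

lemma DecTree.queriesIn_mono {S S' : Finset (Fin n)} (h : S ⊆ S') (t : DecTree n)
    (x : Fin n → Bool) : t.queriesIn S x ≤ t.queriesIn S' x :=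
  List.countP_mono_left fun _ _ hk => by simpa using h (by simpa using hk)

lemma agreeOutside_erase_update_subset {S : Finset (Fin n)} {a : Fin n} (ha : a ∈ S)
    (y : Fin n → Bool) (b : Bool) : agreeOutside (S.erase a) (update y a b) ⊆ agreeOutside S y :=
  fun x hx => mem_agreeOutside.mpr fun i hi => by
    have hia : i ≠ a := fun h => hi (h ▸ ha)
    simpa [hia] using mem_agreeOutside.mp hx i fun h => hi (mem_of_mem_erase h)

def DecTree.FindsZeroOn (t : DecTree n) (S : Finset (Fin n)) (y : Fin n → Bool) : Prop :=
  ∀ x ∈ agreeOutside S y, (∃ i ∈ S, x i = false) → ∃ i ∈ t.path x, i ∈ S ∧ x i = false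

lemma DecTree.FindsZeroOn.eq_empty_of_leaf {b : Bool} {S : Finset (Fin n)} {y : Fin n → Bool}
    (ht : (DecTree.leaf b).FindsZeroOn S y) : S = ∅ := by
  by_contra hne
  obtain ⟨a, ha⟩ := nonempty_iff_ne_empty.mpr hne
  obtain ⟨i, hi, -⟩ := ht (fun i => if i ∈ S then false else y i) (by simp +contextual)
    ⟨a, ha, by simp [ha]⟩
  simp [DecTree.path] at hi

lemma DecTree.FindsZeroOn.node_of_notMem {i : Fin n} {t0 t1 : DecTree n} {S : Finset (Fin n)}
    {y : Fin n → Bool} (ht : (DecTree.node i t0 t1).FindsZeroOn S y) (hi : i ∉ S) :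
    (if y i then t1 else t0).FindsZeroOn S y := fun x hx hzero => by
  obtain ⟨k, hk, hkS, hxk⟩ := ht x hx hzero
  have hki : k ≠ i := fun h => hi (h ▸ hkS)
  rw [← mem_agreeOutside.mp hx i hi]
  exact ⟨k, by cases hxi : x i <;> simpa [DecTree.path, hki, hxi] using hk, hkS, hxk⟩

lemma DecTree.FindsZeroOn.node_true {i : Fin n} {t0 t1 : DecTree n} {S : Finset (Fin n)}
    {y : Fin n → Bool} (ht : (DecTree.node i t0 t1).FindsZeroOn S y) (hi : i ∈ S) :
    t1.FindsZeroOn (S.erase i) (update y i true) := fun x hx ⟨j, hj, hxj⟩ => by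
  have hxi := apply_eq_of_mem_agreeOutside_update (notMem_erase i S) hx
  obtain ⟨k, hk, hkS, hxk⟩ :=
    ht x (agreeOutside_erase_update_subset hi y true hx) ⟨j, mem_of_mem_erase hj, hxj⟩
  have hki : k ≠ i := fun h => by simp_all
  exact ⟨k, by simpa [DecTree.path, hxi, hki] using hk, mem_erase.mpr ⟨hki, hkS⟩, hxk⟩

lemma searchCost_le_expectOn_queriesIn (hp : ∀ i, 0 ≤ p i ∧ p i ≤ 1) {t : DecTree n}
    {S : Finset (Fin n)} {y : Fin n → Bool} (ht : t.FindsZeroOn S y) :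
    searchCost p S ≤ expectOn p S y (fun x => zeroInd S x * t.queriesIn S x) := by
  induction t generalizing S y with
  | leaf b =>
    obtain rfl := ht.eq_empty_of_leaf
    simp [searchCost_empty, DecTree.queriesIn, DecTree.path, expectOn_const]
  | node i t0 t1 ih0 ih1 =>
    by_cases hi : i ∈ S
    · have hfalse : 1 ≤ expectOn p (S.erase i) (update y i false)
          (fun x => zeroInd S x * (DecTree.node i t0 t1).queriesIn S x) := by
        rw [← expectOn_const (p := p) (S.erase i) (update y i false) 1]
        refine expectOn_mono hp fun x hx => ?_
        have hxi := apply_eq_of_mem_agreeOutside_update (notMem_erase i S) hx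
        simp [zeroInd_of_eq_false hi hxi, DecTree.queriesIn_node, hi]
      have htrue : (1 - ∏ l ∈ S.erase i, p l) + searchCost p (S.erase i)
          ≤ expectOn p (S.erase i) (update y i true)
            (fun x => zeroInd S x * (DecTree.node i t0 t1).queriesIn S x) := by
        rw [← expectOn_zeroInd (S.erase i) (update y i true)]
        refine (add_le_add le_rfl (ih1 (ht.node_true hi))).trans ?_
        rw [← expectOn_add]
        refine expectOn_mono hp fun x hx => ?_
        have hxi := apply_eq_of_mem_agreeOutside_update (notMem_erase i S) hx
        have hmono := mul_le_mul_of_nonneg_left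
          (Nat.cast_le (α := ℝ).mpr (t1.queriesIn_mono (erase_subset i S) x)) (zeroInd_nonneg S x)
        simp only [Pi.add_apply, zeroInd_erase_of_eq_true S hxi, DecTree.queriesIn_node, hxi,
          if_true, hi]
        push_cast
        linarith
      calc searchCost p S
          ≤ (1 - ∏ l ∈ S, p l) + p i * searchCost p (S.erase i) := searchCost_le hi
        _ = (1 - p i) * 1 + p i * ((1 - ∏ l ∈ S.erase i, p l) + searchCost p (S.erase i)) := by
          rw [← mul_prod_erase S p hi]
          ring
        _ ≤ expectOn p S y (fun x => zeroInd S x * (DecTree.node i t0 t1).queriesIn S x) := by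
          rw [expectOn_of_mem hi]
          gcongr
          exacts [by linarith [hp i], (hp i).1]
    · have hbranch : ∀ b : Bool, (if b then t1 else t0).FindsZeroOn S y →
          searchCost p S ≤ expectOn p S y
            (fun x => zeroInd S x * (if b then t1 else t0).queriesIn S x) := by
        intro b
        cases b
        exacts [ih0, ih1]
      refine (hbranch (y i) (ht.node_of_notMem hi)).trans_eq (expectOn_congr fun x hx => ?_)
      rw [DecTree.queriesIn_node, if_neg hi, mem_agreeOutside.mp hx i hi, add_zero]

end TreeLowerBound

section ReadOnceDNF

variable {n m : ℕ} {T : Fin m → Finset (Fin n)} {f : (Fin n → Bool) → Bool}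

lemma eq_false_iff_of_dnf (hf : ∀ x, f x = true ↔ ∃ j, ∀ i ∈ T j, x i = true)
    (x : Fin n → Bool) : f x = false ↔ ∀ j, ∃ i ∈ T j, x i = false := by
  rw [← Bool.not_eq_true, hf]
  push Not
  simp only [ne_eq, Bool.not_eq_true]

lemma exists_subset_of_determines_of_dnf (hf : ∀ x, f x = true ↔ ∃ j, ∀ i ∈ T j, x i = true)
    {S : Finset (Fin n)} {x : Fin n → Bool} (hd : Determines n f S x) (hx : f x = true) :
    ∃ j, T j ⊆ S := by
  obtain ⟨j, hj⟩ := (hf _).mp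
    ((hd (fun i => if i ∈ S then x i else false) (by simp +contextual)).trans hx)
  exact ⟨j, fun i hi => by_contra fun h => by simpa [h] using hj i hi⟩

lemma exists_mem_of_determines_of_dnf (hf : ∀ x, f x = true ↔ ∃ j, ∀ i ∈ T j, x i = true)
    {S : Finset (Fin n)} {x : Fin n → Bool} (hd : Determines n f S x) (hx : f x = false)
    (j : Fin m) : ∃ i ∈ S, i ∈ T j ∧ x i = false := by
  obtain ⟨i, hi, hxi⟩ := (eq_false_iff_of_dnf hf _).mp
    ((hd (fun i => if i ∈ S then x i else true) (by simp +contextual)).trans hx) j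
  by_cases h : i ∈ S
  · exact ⟨i, h, hi, by simpa [h] using hxi⟩
  · simp [h] at hxi

lemma eq_false_iff_of_mem_agreeOutside (hdisj : ∀ j k, j ≠ k → Disjoint (T j) (T k))
    (hf : ∀ x, f x = true ↔ ∃ j, ∀ i ∈ T j, x i = true) {j : Fin m} {x y : Fin n → Bool}
    (hx : x ∈ agreeOutside (T j) y) :
    f x = false ↔ (∀ k ≠ j, ∃ i ∈ T k, y i = false) ∧ ∃ i ∈ T j, x i = false := by
  have hout : ∀ k ≠ j, ∀ i ∈ T k, x i = y i := fun k hk i hi =>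
    mem_agreeOutside.mp hx i (disjoint_left.mp (hdisj k j hk) hi)
  rw [eq_false_iff_of_dnf hf]
  constructor
  · intro h
    refine ⟨fun k hk => ?_, h j⟩
    obtain ⟨i, hi, hxi⟩ := h k
    exact ⟨i, hi, (hout k hk i hi).symm.trans hxi⟩
  · rintro ⟨hothers, hj⟩ k
    by_cases hkj : k = j
    · exact hkj ▸ hj
    · obtain ⟨i, hi, hyi⟩ := hothers k hkj
      exact ⟨i, hi, (hout k hkj i hi).trans hyi⟩

variable {p : Fin n → ℝ}

lemma sum_firstZero_searchOrder_le (hp : ∀ i, 0 ≤ p i ∧ p i ≤ 1)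
    (hdisj : ∀ j k, j ≠ k → Disjoint (T j) (T k))
    (hf : ∀ x, f x = true ↔ ∃ j, ∀ i ∈ T j, x i = true)
    {t : DecTree n} (ht : t.Computes f) (j : Fin m) :
    ∑ x, prodWeight n p x * (if f x then 0 else (firstZero (searchOrder p (T j)) x : ℝ))
      ≤ ∑ x, prodWeight n p x * (if f x then 0 else (t.queriesIn (T j) x : ℝ)) := by
  refine sum_prodWeight_mul_le_of_forall_expectOn_le hp (T j) fun y => ?_
  by_cases hothers : ∀ k ≠ j, ∃ i ∈ T k, y i = false
  · have hcongr (g : (Fin n → Bool) → ℝ) :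
        expectOn p (T j) y (fun x => if f x then 0 else g x)
          = expectOn p (T j) y (fun x => zeroInd (T j) x * g x) := by
      refine expectOn_congr fun x hx => ?_
      by_cases hzero : ∃ i ∈ T j, x i = false
      · simp [(eq_false_iff_of_mem_agreeOutside hdisj hf hx).mpr ⟨hothers, hzero⟩, zeroInd, hzero]
      · have hfx : f x = true := by
          simpa [eq_false_iff_of_mem_agreeOutside hdisj hf hx, hzero] using (f x).eq_false_or_eq_true.symm
        simp [hfx, zeroInd, hzero]
    rw [hcongr, hcongr, expectOn_zeroInd_mul_firstZero_searchOrder]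
    refine searchCost_le_expectOn_queriesIn hp fun x hx hzero => ?_
    obtain ⟨i, hi, hiT, hxi⟩ := exists_mem_of_determines_of_dnf hf (ht.determines x)
      ((eq_false_iff_of_mem_agreeOutside hdisj hf hx).mpr ⟨hothers, hzero⟩) j
    exact ⟨i, List.mem_toFinset.mp hi, hiT, hxi⟩
  · have hvanish (g : (Fin n → Bool) → ℝ) :
        expectOn p (T j) y (fun x => if f x then 0 else g x) = 0 := by
      refine (expectOn_congr fun x hx => if_pos ?_).trans (expectOn_const (T j) y 0)
      by_contra hfx
      exact hothers ((eq_false_iff_of_mem_agreeOutside hdisj hf hx).mp (by simpa using hfx)).1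
    rw [hvanish, hvanish]

lemma sum_prodWeight_mul_le_adExpCost (hp : ∀ i, 0 ≤ p i ∧ p i ≤ 1)
    (hdisj : ∀ j k, j ≠ k → Disjoint (T j) (T k)) (hcover : ∀ i : Fin n, ∃ j, i ∈ T j)
    (hf : ∀ x, f x = true ↔ ∃ j, ∀ i ∈ T j, x i = true)
    {s : ℕ} (hcard : ∀ j, (T j).card = s) {t : DecTree n} (ht : t.Computes f) :
    ∑ x, prodWeight n p x
        * (if f x then (s : ℝ) else ∑ j, (firstZero (searchOrder p (T j)) x : ℝ))
      ≤ adExpCost n (fun _ => 1) p t := by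
  have hunique (i : Fin n) : ∃! j, i ∈ T j := by
    obtain ⟨j, hj⟩ := hcover i
    exact ⟨j, hj, fun k hk => by_contra fun h => disjoint_left.mp (hdisj k j h) hk hj⟩
  have hsplit (x : Fin n → Bool) (a : ℝ) (b : Fin m → ℝ) :
      (if f x then a else ∑ j, b j) = (if f x then a else 0) + ∑ j, if f x then 0 else b j := by
    split_ifs <;> simp
  have hlength (x : Fin n → Bool) : t.costOn (fun _ => 1) x
      = if f x then ((t.path x).length : ℝ) else ∑ j, (t.queriesIn (T j) x : ℝ) := by
    rw [DecTree.costOn_eq_sum_map_path]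
    split_ifs
    · simp
    · simp [DecTree.queriesIn, ← Nat.cast_sum, List.sum_countP_mem_eq_length T hunique]
  have hpos (x : Fin n → Bool) : 0 ≤ prodWeight n p x := prodWeightOn_nonneg hp univ x
  have hterm (x : Fin n → Bool) : prodWeight n p x * (if f x then (s : ℝ) else 0)
      ≤ prodWeight n p x * (if f x then ((t.path x).length : ℝ) else 0) := by
    refine mul_le_mul_of_nonneg_left ?_ (hpos x)
    split_ifs with hfx
    · obtain ⟨j, hj⟩ := exists_subset_of_determines_of_dnf hf (ht.determines x) hfx
      exact_mod_cast (hcard j ▸ card_le_card hj).trans (List.toFinset_card_le _)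
    · rfl
  simp only [adExpCost, hlength, hsplit, mul_add, mul_sum, sum_add_distrib]
  refine add_le_add (sum_le_sum fun x _ => hterm x) ?_
  rw [sum_comm]
  conv_rhs => rw [sum_comm]
  exact sum_le_sum fun j _ => sum_firstZero_searchOrder_le hp hdisj hf ht j

end ReadOnceDNF

section RoundRobin

variable {n m : ℕ}

lemma Fin.val_le_of_strictMono {g : Fin n → ℕ} (hg : StrictMono g) (k : Fin n) : (k : ℕ) ≤ g k := by
  simpa using card_le_card_of_injOn g (s := Iio k) (t := range (g k))
    (fun i hi => by simpa using hg (mem_Iio.mp hi)) hg.injective.injOn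

lemma exists_perm_symm_le_of_injective {key : Fin n → ℕ} (hkey : Injective key) :
    ∃ π : Equiv.Perm (Fin n), ∀ i, (π.symm i : ℕ) ≤ key i := by
  refine ⟨Tuple.sort key, fun i => ?_⟩
  have hmono : StrictMono (key ∘ Tuple.sort key) :=
    (Tuple.monotone_sort key).strictMono_of_injective (hkey.comp (Equiv.injective _))
  simpa using Fin.val_le_of_strictMono hmono ((Tuple.sort key).symm i)

lemma exists_perm_roundRobin {σ : Fin m → List (Fin n)} {term : Fin n → Fin m}
    (hmem : ∀ i, i ∈ σ (term i)) :
    ∃ π : Equiv.Perm (Fin n), ∀ i, (π.symm i : ℕ) ≤ m * (σ (term i)).idxOf i + term i := by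
  refine exists_perm_symm_le_of_injective fun i i' h => ?_
  have hlt (i : Fin n) : (term i : ℕ) < m := (term i).isLt
  have hterm : term i = term i' := Fin.ext <| by
    simpa [Nat.mod_eq_of_lt (hlt i), Nat.mod_eq_of_lt (hlt i')] using congrArg (· % m) h
  have hdiv (i : Fin n) : (m * (σ (term i)).idxOf i + term i) / m = (σ (term i)).idxOf i := by
    rw [Nat.mul_add_div (by have := hlt i; omega), Nat.div_eq_of_lt (hlt i), add_zero]
  have hidx : (σ (term i)).idxOf i = (σ (term i)).idxOf i' := by
    have h' := congrArg (· / m) h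
    simp only [hdiv] at h'
    rwa [← hterm] at h'
  exact (List.idxOf_inj (hmem i)).mp hidx

lemma naCost_le_of_determines {f : (Fin n → Bool) → Bool} {π : Equiv.Perm (Fin n)} {K : ℕ}
    {x : Fin n → Bool} (h : Determines n f (prefixSet n π K) x) :
    naCost n f (fun _ => 1) π x ≤ K := by
  have hcard (k : ℕ) : (prefixSet n π k).card ≤ k := by
    simpa using card_le_card_of_injOn (fun i => (π.symm i : ℕ)) (t := range k)
      (fun i hi => by simpa [prefixSet] using hi) fun a _ b _ hab => π.symm.injective (Fin.ext hab)
  have hsteps : naSteps n f π x ≤ K := Nat.sInf_le h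
  simp only [naCost, sum_const, nsmul_eq_mul, mul_one]
  exact_mod_cast (hcard _).trans hsteps

lemma naCost_le (f : (Fin n → Bool) → Bool) (π : Equiv.Perm (Fin n)) (x : Fin n → Bool) :
    naCost n f (fun _ => 1) π x ≤ n := by
  simp only [naCost, sum_const, nsmul_eq_mul, mul_one]
  exact_mod_cast (card_filter_le _ _).trans (card_fin n).le

variable {T : Fin m → Finset (Fin n)} {f : (Fin n → Bool) → Bool}

lemma naCost_le_of_roundRobin (hdisj : ∀ j k, j ≠ k → Disjoint (T j) (T k))
    (hf : ∀ x, f x = true ↔ ∃ j, ∀ i ∈ T j, x i = true)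
    {σ : Fin m → List (Fin n)} (hσ : ∀ j i, i ∈ σ j ↔ i ∈ T j)
    {term : Fin n → Fin m} (hterm : ∀ i, i ∈ T (term i)) {π : Equiv.Perm (Fin n)}
    (hπ : ∀ i, (π.symm i : ℕ) ≤ m * (σ (term i)).idxOf i + term i)
    {x : Fin n → Bool} (hx : f x = false) :
    naCost n f (fun _ => 1) π x ≤ m * ∑ j, firstZero (σ j) x := by
  set K := m * ∑ j, firstZero (σ j) x
  have hfirst (j : Fin m) : ∃ i ∈ prefixSet n π K, i ∈ T j ∧ x i = false := by
    obtain ⟨i, hiT, hxi⟩ := (eq_false_iff_of_dnf hf x).mp hx j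
    obtain ⟨k, hk, hxk, hlt⟩ := exists_idxOf_lt_firstZero ⟨i, (hσ j i).mpr hiT, hxi⟩
    have hkT := (hσ j k).mp hk
    have hterm_k : term k = j :=
      by_contra fun h => disjoint_left.mp (hdisj _ _ h) (hterm k) hkT
    have hrank := hπ k
    rw [hterm_k] at hrank
    have hle : firstZero (σ j) x ≤ ∑ j, firstZero (σ j) x :=
      single_le_sum (f := fun j => firstZero (σ j) x) (fun _ _ => Nat.zero_le _) (mem_univ j)
    refine ⟨k, ?_, hkT, hxk⟩
    simp only [prefixSet, mem_filter, mem_univ, true_and]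
    calc (π.symm k : ℕ) ≤ m * (σ j).idxOf k + j := hrank
      _ < m * ((σ j).idxOf k + 1) := by rw [mul_add, mul_one]; exact Nat.add_lt_add_left j.isLt _
      _ ≤ K := Nat.mul_le_mul_left m (hlt.trans_le hle)
  have hdet : Determines n f (prefixSet n π K) x := fun x' hx' => by
    rw [hx, eq_false_iff_of_dnf hf]
    intro j
    obtain ⟨i, hi, hiT, hxi⟩ := hfirst j
    exact ⟨i, hiT, (hx' i hi).trans hxi⟩
  exact_mod_cast naCost_le_of_determines hdet

lemma naExpCost_le_of_roundRobin (hp : ∀ i, 0 ≤ p i ∧ p i ≤ 1)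
    (hdisj : ∀ j k, j ≠ k → Disjoint (T j) (T k))
    (hf : ∀ x, f x = true ↔ ∃ j, ∀ i ∈ T j, x i = true)
    {σ : Fin m → List (Fin n)} (hσ : ∀ j i, i ∈ σ j ↔ i ∈ T j)
    {term : Fin n → Fin m} (hterm : ∀ i, i ∈ T (term i)) {π : Equiv.Perm (Fin n)}
    (hπ : ∀ i, (π.symm i : ℕ) ≤ m * (σ (term i)).idxOf i + term i) {s : ℕ} (hn : n = m * s) :
    naExpCost n f (fun _ => 1) p π
      ≤ m * ∑ x, prodWeight n p x * (if f x then (s : ℝ) else ∑ j, (firstZero (σ j) x : ℝ)) := by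
  rw [naExpCost, mul_sum]
  refine sum_le_sum fun x _ => ?_
  rw [mul_left_comm]
  refine mul_le_mul_of_nonneg_left ?_ (prodWeightOn_nonneg hp univ x)
  split_ifs with hfx
  · exact (naCost_le f π x).trans (by rw [hn]; push_cast; rfl)
  · exact_mod_cast naCost_le_of_roundRobin hdisj hf hσ hterm hπ (by simpa using hfx)

end RoundRobin

theorem stmt3_general (n m : ℕ) (hdvd : m ∣ n)
    (T : Fin m → Finset (Fin n)) (f : (Fin n → Bool) → Bool)
    (hcard : ∀ j, (T j).card = n / m)
    (hcover : ∀ i : Fin n, ∃ j, i ∈ T j)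
    (hf : IsReadOnceDNF n m T f)
    (p : Fin n → ℝ) (hp : ∀ i, 0 < p i ∧ p i < 1) :
    ∃ π : Equiv.Perm (Fin n),
      naExpCost n f (fun _ => 1) p π ≤ (m : ℝ) * OPTA n f (fun _ => 1) p := by
  obtain ⟨-, hdisj, hf⟩ := hf
  have hp' (i : Fin n) : 0 ≤ p i ∧ p i ≤ 1 := ⟨(hp i).1.le, (hp i).2.le⟩
  choose term hterm using hcover
  obtain ⟨π, hπ⟩ := exists_perm_roundRobin (σ := fun j => searchOrder p (T j))
    fun i => mem_searchOrder.mpr (hterm i)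
  refine ⟨π, ?_⟩
  obtain ⟨t₀, ht₀⟩ := DecTree.exists_computes f
  rw [OPTA, ← smul_eq_mul, ← Real.sInf_smul_of_nonneg (Nat.cast_nonneg m)]
  refine le_csInf ⟨_, Set.smul_mem_smul_set ⟨t₀, ht₀, rfl⟩⟩ ?_
  rintro _ ⟨_, ⟨t, ht, rfl⟩, rfl⟩
  calc naExpCost n f (fun _ => 1) p π
      ≤ m * ∑ x, prodWeight n p x
          * (if f x then ((n / m : ℕ) : ℝ) else ∑ j, (firstZero (searchOrder p (T j)) x : ℝ)) :=
        naExpCost_le_of_roundRobin hp' hdisj hf (fun _ _ => mem_searchOrder) hterm hπ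
          (Nat.mul_div_cancel' hdvd).symm
    _ ≤ (m : ℝ) • adExpCost n (fun _ => 1) p t := by
        rw [smul_eq_mul]
        gcongr
        exact sum_prodWeight_mul_le_adExpCost hp' hdisj (fun i => ⟨term i, hterm i⟩) hf hcard ht

/-- For a monotone read-once DNF `f` with `m` terms, each containing exactly `n/m`
variables (so every variable appears in exactly one term), under unit costs and
arbitrary probabilities there is a non-adaptive strategy of expected cost at most
`m·OPT_A(f)`. -/
theorem stmt3 (n m : ℕ) (hm : 0 < m) (hdvd : m ∣ n)
    (T : Fin m → Finset (Fin n)) (f : (Fin n → Bool) → Bool)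
    (hcard : ∀ j, (T j).card = n / m)
    (hcover : ∀ i : Fin n, ∃ j, i ∈ T j)
    (hf : IsReadOnceDNF n m T f)
    (p : Fin n → ℝ) (hp : ∀ i, 0 < p i ∧ p i < 1) :
    ∃ π : Equiv.Perm (Fin n),
      naExpCost n f (fun _ => 1) p π ≤ (m : ℝ) * OPTA n f (fun _ => 1) p :=
  stmt3_general n m hdvd T f hcard hcover hf p hp
end

section
/- There is a constant K > 0 such that for every ε > 0 there exists N_ε with the following property: for every integer ℓ ≥ 1 with n := ℓ · 2^ℓ > N_ε, there exist a monotone read-once DNF f on n variables (consisting of 2^ℓ pairwise-disjoint terms of ℓ variables each) and a cost vector c ∈ ℝ^n with all entries positive such that under the uniform distribution OPT_N(f, c) ≥ K · (n^{1−ε} / log₂ n) · OPT_A(f, c). -/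
open Finset

/-!
Take the tribes function with `2^l` terms of `l` variables and let the `t`-th variable of every
term cost `2^t`. Adaptively, a term can be read in order of increasing cost and abandoned at its
first `0`, which costs `∑ₜ 2^t · 2^(-t) = l` in expectation, so `OPT_A ≤ l·2^l = n`.

A non-adaptive order fixes in advance when each term is finished; let `S` be the half of the terms
finished last. With probability at least `1/32` the function is `0` while some term of `S` is `1`
except at its last-read variable. That variable must be read, so by then every term outside `S`
has been read completely, at cost at least `2^(l-1)` each. Hence `OPT_N ≥ 4^l/128 = (n/l)²/128`,
while `n^(1-ε)/log₂ n ≤ n/l²` for large `l`.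
-/

lemma prodWeight_nonneg {n : ℕ} {p : Fin n → ℝ} (hp : ∀ i, 0 ≤ p i ∧ p i ≤ 1)
    (x : Fin n → Bool) : 0 ≤ prodWeight n p x :=
  prod_nonneg fun i _ => by split <;> linarith [hp i]

lemma prodWeight_uniform (n : ℕ) (x : Fin n → Bool) :
    prodWeight n (fun _ => 1/2) x = 1 / 2 ^ n := by
  simp [prodWeight, show (1 : ℝ) - 2⁻¹ = 2⁻¹ by norm_num]

/-- Flipping coordinate `i` swaps the two branches, so each receives half of the total mass. -/
lemma sum_ite_apply_eq_add_div_two {n : ℕ} {F₀ F₁ : (Fin n → Bool) → ℝ} {i : Fin n}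
    (h₀ : ∀ x b, F₀ (Function.update x i b) = F₀ x)
    (h₁ : ∀ x b, F₁ (Function.update x i b) = F₁ x) :
    ∑ x, (if x i then F₁ x else F₀ x) = (∑ x, F₀ x + ∑ x, F₁ x) / 2 := by
  have hflip : Function.Involutive fun x : Fin n → Bool => Function.update x i (!x i) := by
    intro x; ext k; by_cases hk : k = i <;> simp [hk]
  have hswap :
      ∑ x, (if x i then F₁ x else F₀ x) = ∑ x, (if x i then F₀ x else F₁ x) := by
    rw [← Equiv.sum_comp (hflip.toPerm _)]
    refine sum_congr rfl fun x _ => ?_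
    cases hx : x i <;> simp [hx, h₀, h₁]
  have htotal : ∑ x, (if x i then F₁ x else F₀ x) + ∑ x, (if x i then F₀ x else F₁ x) =
      ∑ x, F₀ x + ∑ x, F₁ x := by
    rw [← sum_add_distrib, ← sum_add_distrib]
    refine sum_congr rfl fun x _ => ?_
    cases x i <;> simp [add_comm]
  linarith

/-- `a₀ + a₁ / 2 + a₂ / 4 + ⋯`: the expected cost, under the uniform distribution, of
testing variables with costs `a₀, a₁, …` in order until the first `false`. -/
noncomputable def halvingSum : List ℝ → ℝ
  | [] => 0
  | a :: as => a + halvingSum as / 2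

lemma halvingSum_map_mul (a : ℝ) (as : List ℝ) :
    halvingSum (as.map (a * ·)) = a * halvingSum as := by
  induction as with
  | nil => simp [halvingSum]
  | cons b as ih => simp only [List.map_cons, halvingSum, ih]; ring

lemma halvingSum_two_pow (l : ℕ) :
    halvingSum ((List.finRange l).map fun t : Fin l => (2 : ℝ) ^ (t : ℕ)) = l := by
  induction l with
  | zero => simp [halvingSum]
  | succ l ih =>
    have hsucc :
        (List.finRange l).map ((fun t : Fin (l + 1) => (2 : ℝ) ^ (t : ℕ)) ∘ Fin.succ) =
          ((List.finRange l).map fun t : Fin l => (2 : ℝ) ^ (t : ℕ)).map (2 * ·) := by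
      simp [Function.comp_def, pow_succ']
    rw [List.finRange_succ, List.map_cons, List.map_map, halvingSum, hsucc, halvingSum_map_mul, ih]
    simp only [Fin.val_zero, pow_zero, Nat.cast_succ]
    ring

namespace DecTree

variable {n : ℕ}

def vars : DecTree n → Finset (Fin n)
  | leaf _ => ∅
  | node i t0 t1 => insert i (t0.vars ∪ t1.vars)

lemma costOn_nonneg {c : Fin n → ℝ} (hc : ∀ i, 0 ≤ c i) (t : DecTree n)
    (x : Fin n → Bool) : 0 ≤ t.costOn c x := by
  induction t with
  | leaf => exact le_rfl
  | node i t0 t1 ih0 ih1 =>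
    rw [costOn]
    split <;> linarith [hc i]

lemma costOn_update_of_notMem {c : Fin n → ℝ} {t : DecTree n} {i : Fin n} (hi : i ∉ t.vars)
    (x : Fin n → Bool) (b : Bool) : t.costOn c (Function.update x i b) = t.costOn c x := by
  induction t with
  | leaf => rfl
  | node k t0 t1 ih0 ih1 =>
    simp only [vars, mem_insert, mem_union, not_or] at hi
    simp only [costOn, Function.update_of_ne (Ne.symm hi.1), ih0 hi.2.1, ih1 hi.2.2]

lemma adExpCost_nonneg {c p : Fin n → ℝ} (hc : ∀ i, 0 ≤ c i)
    (hp : ∀ i, 0 ≤ p i ∧ p i ≤ 1) (t : DecTree n) : 0 ≤ adExpCost n c p t :=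
  sum_nonneg fun x _ => mul_nonneg (prodWeight_nonneg hp x) (t.costOn_nonneg hc x)

lemma adExpCost_uniform (c : Fin n → ℝ) (t : DecTree n) :
    adExpCost n c (fun _ => 1/2) t = (∑ x, t.costOn c x) / 2 ^ n := by
  simp only [adExpCost, prodWeight_uniform, one_div_mul_eq_div, sum_div]

lemma adExpCost_node (c : Fin n → ℝ) {i : Fin n} {t0 t1 : DecTree n} (h0 : i ∉ t0.vars)
    (h1 : i ∉ t1.vars) :
    adExpCost n c (fun _ => 1/2) (node i t0 t1) =
      c i + (adExpCost n c (fun _ => 1/2) t0 + adExpCost n c (fun _ => 1/2) t1) / 2 := by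
  simp only [adExpCost_uniform, costOn, sum_add_distrib, sum_const, card_univ, Fintype.card_fun,
    Fintype.card_bool, Fintype.card_fin, nsmul_eq_mul, Nat.cast_pow, Nat.cast_ofNat,
    sum_ite_apply_eq_add_div_two (costOn_update_of_notMem h0) (costOn_update_of_notMem h1)]
  field_simp

def allOrElse (t : DecTree n) : List (Fin n) → DecTree n
  | [] => leaf true
  | v :: vs => node v t (allOrElse t vs)

def ofDNF : List (List (Fin n)) → DecTree n
  | [] => leaf false
  | vs :: terms => (ofDNF terms).allOrElse vs

lemma eval_allOrElse (t : DecTree n) (vs : List (Fin n)) (x : Fin n → Bool) :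
    (t.allOrElse vs).eval x = (vs.all x || t.eval x) := by
  induction vs with
  | nil => rfl
  | cons v vs ih => cases hv : x v <;> simp [allOrElse, eval, hv, ih]

lemma eval_ofDNF (terms : List (List (Fin n))) (x : Fin n → Bool) :
    (ofDNF terms).eval x = terms.any (·.all x) := by
  induction terms with
  | nil => rfl
  | cons vs terms ih => simp [ofDNF, eval_allOrElse, ih]

lemma vars_allOrElse_subset (t : DecTree n) (vs : List (Fin n)) :
    (t.allOrElse vs).vars ⊆ vs.toFinset ∪ t.vars := by
  induction vs with
  | nil => simp [allOrElse, vars]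
  | cons v vs ih =>
    simp only [allOrElse, vars, List.toFinset_cons, insert_subset_iff, mem_union, mem_insert,
      true_or, union_subset_iff, true_and]
    exact ⟨subset_union_right.trans (union_subset_union (subset_insert _ _) le_rfl),
      ih.trans (union_subset_union (subset_insert _ _) le_rfl)⟩

lemma vars_ofDNF_subset (terms : List (List (Fin n))) :
    (ofDNF terms).vars ⊆ terms.flatten.toFinset := by
  induction terms with
  | nil => simp [ofDNF, vars]
  | cons vs terms ih =>
    simpa [ofDNF, List.toFinset_append] using
      (vars_allOrElse_subset _ vs).trans (union_subset_union le_rfl ih)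

lemma adExpCost_allOrElse_le {c : Fin n → ℝ} (hc : ∀ i, 0 ≤ c i) (t : DecTree n)
    {vs : List (Fin n)} (hvs : vs.Nodup) (hdisj : ∀ v ∈ vs, v ∉ t.vars) :
    adExpCost n c (fun _ => 1/2) (t.allOrElse vs) ≤
      halvingSum (vs.map c) + adExpCost n c (fun _ => 1/2) t := by
  induction vs with
  | nil =>
    simp only [allOrElse, List.map_nil, halvingSum, zero_add, adExpCost_uniform]
    gcongr
    exact costOn_nonneg hc t _
  | cons v vs ih =>
    obtain ⟨hv, hvs⟩ := List.nodup_cons.mp hvs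
    have hv' : v ∉ (t.allOrElse vs).vars := fun h => by
      rcases mem_union.mp (vars_allOrElse_subset t vs h) with h | h
      · exact hv (List.mem_toFinset.mp h)
      · exact hdisj v List.mem_cons_self h
    rw [allOrElse, adExpCost_node c (hdisj v List.mem_cons_self) hv']
    simp only [List.map_cons, halvingSum]
    linarith [ih hvs fun w hw => hdisj w (List.mem_cons_of_mem v hw)]

lemma adExpCost_ofDNF_le {c : Fin n → ℝ} (hc : ∀ i, 0 ≤ c i) {terms : List (List (Fin n))}
    (hterms : terms.flatten.Nodup) :
    adExpCost n c (fun _ => 1/2) (ofDNF terms) ≤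
      (terms.map fun vs => halvingSum (vs.map c)).sum := by
  induction terms with
  | nil => simp only [ofDNF, adExpCost_uniform, costOn, sum_const_zero, zero_div, List.map_nil,
      List.sum_nil, le_refl]
  | cons vs terms ih =>
    rw [List.flatten_cons, List.nodup_append] at hterms
    obtain ⟨hvs, hrest, hdisj⟩ := hterms
    refine (adExpCost_allOrElse_le hc _ hvs fun v hv hmem => ?_).trans ?_
    · exact hdisj v hv v (List.mem_toFinset.mp (vars_ofDNF_subset terms hmem)) rfl
    · simpa using ih hrest

end DecTree

lemma OPTA_le_adExpCost {n : ℕ} {f : (Fin n → Bool) → Bool} {c p : Fin n → ℝ}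
    (hc : ∀ i, 0 ≤ c i) (hp : ∀ i, 0 ≤ p i ∧ p i ≤ 1) {t : DecTree n}
    (ht : t.Computes f) :
    OPTA n f c p ≤ adExpCost n c p t := by
  refine csInf_le ⟨0, ?_⟩ ⟨t, ht, rfl⟩
  rintro r ⟨t', -, rfl⟩
  exact t'.adExpCost_nonneg hc hp

section NonAdaptive

variable {n : ℕ} {f : (Fin n → Bool) → Bool}

lemma mem_prefixSet {π : Equiv.Perm (Fin n)} {k : ℕ} {i : Fin n} :
    i ∈ prefixSet n π k ↔ (π.symm i : ℕ) < k := by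
  simp [prefixSet]

lemma determines_prefixSet_naSteps (π : Equiv.Perm (Fin n)) (x : Fin n → Bool) :
    Determines n f (prefixSet n π (naSteps n f π x)) x := by
  refine Nat.sInf_mem (s := {k | Determines n f (prefixSet n π k) x}) ⟨n, fun x' hx' => ?_⟩
  exact congrArg f <| funext fun i => hx' i (mem_prefixSet.mpr (π.symm i).isLt)

lemma lt_naSteps_of_update_ne {π : Equiv.Perm (Fin n)} {x : Fin n → Bool} {i : Fin n} {b : Bool}
    (h : f (Function.update x i b) ≠ f x) : (π.symm i : ℕ) < naSteps n f π x := by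
  by_contra hge
  refine h (determines_prefixSet_naSteps π x _ fun i' hi' => Function.update_of_ne ?_ _ _)
  rintro rfl
  exact hge (mem_prefixSet.mp hi')

lemma sum_le_naCost_of_update_ne {c : Fin n → ℝ} (hc : ∀ i, 0 ≤ c i)
    {π : Equiv.Perm (Fin n)} {x : Fin n → Bool} {i : Fin n} {b : Bool}
    (h : f (Function.update x i b) ≠ f x) :
    ∑ i' with π.symm i' ≤ π.symm i, c i' ≤ naCost n f c π x := by
  refine sum_le_sum_of_subset_of_nonneg (fun i' hi' => mem_prefixSet.mpr ?_) fun i' _ _ => hc i'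
  exact lt_of_le_of_lt (Fin.le_def.mp (mem_filter.mp hi').2) (lt_naSteps_of_update_ne h)

lemma naExpCost_uniform (c : Fin n → ℝ) (π : Equiv.Perm (Fin n)) :
    naExpCost n f c (fun _ => 1/2) π = (∑ x, naCost n f c π x) / 2 ^ n := by
  simp only [naExpCost, prodWeight_uniform, one_div_mul_eq_div, sum_div]

lemma le_OPTN {c p : Fin n → ℝ} {r : ℝ} (h : ∀ π, r ≤ naExpCost n f c p π) :
    r ≤ OPTN n f c p :=
  le_csInf ⟨_, 1, rfl⟩ fun _ ⟨π, hπ⟩ => hπ ▸ h π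

end NonAdaptive

lemma Finset.exists_subset_card_eq_forall_sdiff_le {α β : Type*} [DecidableEq α] [LinearOrder β]
    (g : α → β) : ∀ (k : ℕ) (s : Finset α), k ≤ #s →
      ∃ S ⊆ s, #S = k ∧ ∀ j ∈ S, ∀ j' ∈ s \ S, g j' ≤ g j := by
  intro k
  induction k with
  | zero => exact fun s _ => ⟨∅, empty_subset s, rfl, by simp⟩
  | succ k ih =>
    intro s hk
    obtain ⟨j₀, hj₀, hmax⟩ := s.exists_max_image g (card_pos.mp (by omega))
    obtain ⟨S, hSs, hSk, hS⟩ := ih (s.erase j₀) (by rw [card_erase_of_mem hj₀]; omega)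
    have hj₀S : j₀ ∉ S := fun h => notMem_erase j₀ s (hSs h)
    refine ⟨insert j₀ S, insert_subset hj₀ (hSs.trans (erase_subset _ _)), by
      rw [card_insert_of_notMem hj₀S, hSk], fun j hj j' hj' => ?_⟩
    simp only [mem_sdiff, mem_insert, not_or] at hj'
    rcases mem_insert.mp hj with rfl | hj
    · exact hmax j' hj'.1
    · exact hS j hj j' (mem_sdiff.mpr ⟨mem_erase.mpr ⟨hj'.2.1, hj'.1⟩, hj'.2.2⟩)

lemma Finset.prod_ite_mem_eq_pow_mul_pow {ι M : Type*} [Fintype ι] [DecidableEq ι] [CommMonoid M]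
    (S : Finset ι) (a b : M) :
    ∏ j, (if j ∈ S then a else b) = a ^ #S * b ^ #Sᶜ := by
  rw [prod_ite, prod_const, prod_const, filter_mem_eq_inter, univ_inter, filter_notMem_eq_sdiff,
    compl_eq_univ_sdiff]

lemma pow_sub_pow_mul_pow_ge (k : ℕ) (hk : 1 ≤ k) :
    (4 * k : ℝ) ^ (4 * k) / 32 ≤
      (4 * k - 1 : ℝ) ^ (4 * k) - (4 * k - 2 : ℝ) ^ (2 * k) * (4 * k - 1 : ℝ) ^ (2 * k) := by
  set N : ℝ := 4 * k with hN
  have hk1 : (1 : ℝ) ≤ k := by exact_mod_cast hk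
  have hN2 : 0 < N - 2 := by linarith
  have hN0 : N ≠ 0 := by linarith
  have hlow : N ^ (2 * k) / 4 ≤ (N - 2) ^ (2 * k) := by
    have hbern := one_add_mul_le_pow (a := -(2 / N))
      (by rw [neg_le_neg_iff, div_le_iff₀ (by linarith)]; linarith) k
    have hhalf : (1 : ℝ) + k * -(2 / N) = 1 / 2 := by rw [hN]; field_simp; ring
    have hratio : 1 + -(2 / N) = (N - 2) / N := by field_simp; ring
    calc N ^ (2 * k) / 4 = N ^ (2 * k) * (1 / 2) ^ 2 := by ring
      _ ≤ N ^ (2 * k) * (((N - 2) / N) ^ k) ^ 2 := by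
        gcongr; rw [← hratio, ← hhalf]; exact hbern
      _ = (N - 2) ^ (2 * k) := by rw [← pow_mul, div_pow]; field_simp; ring_nf
  have hgap : 3 / 2 * (N - 2) ^ (2 * k) ≤ (N - 1) ^ (2 * k) := by
    have hbern := one_add_mul_le_pow (a := 1 / (N - 2)) (by linarith [one_div_pos.mpr hN2]) (2 * k)
    have h32 : (1 / 2 : ℝ) ≤ (2 * k : ℕ) * (1 / (N - 2)) := by
      rw [mul_one_div, le_div_iff₀ hN2]; push_cast; linarith
    have hratio : 1 + 1 / (N - 2) = (N - 1) / (N - 2) := by field_simp; ring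
    calc 3 / 2 * (N - 2) ^ (2 * k) ≤ ((N - 1) / (N - 2)) ^ (2 * k) * (N - 2) ^ (2 * k) := by
          gcongr; rw [← hratio]; linarith
      _ = (N - 1) ^ (2 * k) := by rw [div_pow]; field_simp
  have hA := pow_pos hN2 (2 * k)
  have hC := pow_pos (by linarith : (0 : ℝ) < N) (2 * k)
  rw [show 4 * k = 2 * k + 2 * k by ring, pow_add, pow_add]
  set A := (N - 2) ^ (2 * k)
  set B := (N - 1) ^ (2 * k)
  set C := N ^ (2 * k)
  nlinarith [mul_nonneg (by linarith : 0 ≤ B - 3 / 2 * A) (by linarith : 0 ≤ B - A),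
    mul_nonneg hA.le (by linarith : 0 ≤ B - 3 / 2 * A),
    mul_nonneg (by linarith : 0 ≤ A - C / 4) (by linarith : 0 ≤ A + C / 4)]

namespace Tribes

variable (m l : ℕ)

def index : Fin m × Fin l ≃ Fin (l * m) := (Equiv.prodComm _ _).trans finProdFinEquiv

def term (j : Fin m) : Finset (Fin (l * m)) := univ.image fun t => index m l (j, t)

def fn (x : Fin (l * m) → Bool) : Bool := decide (∃ j, ∀ t, x (index m l (j, t)) = true)

noncomputable def cost (i : Fin (l * m)) : ℝ := 2 ^ (((index m l).symm i).2 : ℕ)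

def termList (j : Fin m) : List (Fin (l * m)) := (List.finRange l).map fun t => index m l (j, t)

def tree : DecTree (l * m) := DecTree.ofDNF ((List.finRange m).map (termList m l))

variable {m l}

@[simp]
lemma cost_index (j : Fin m) (t : Fin l) : cost m l (index m l (j, t)) = 2 ^ (t : ℕ) := by
  simp [cost]

lemma cost_pos (i : Fin (l * m)) : 0 < cost m l i := by
  unfold cost; positivity

lemma fn_eq_true_iff {x : Fin (l * m) → Bool} :
    fn m l x = true ↔ ∃ j, ∀ t, x (index m l (j, t)) = true := by
  simp [fn]

lemma card_term (j : Fin m) : (term m l j).card = l := by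
  rw [term, card_image_of_injective _ fun t t' h => by simpa using h]
  simp

lemma isReadOnceDNF (hl : 1 ≤ l) : IsReadOnceDNF (l * m) m (term m l) (fn m l) := by
  refine ⟨fun j => ⟨_, mem_image_of_mem _ (mem_univ ⟨0, hl⟩)⟩, fun j k hjk => ?_,
    fun x => ?_⟩
  · simp only [term, disjoint_left, mem_image, mem_univ, true_and]
    rintro _ ⟨t, rfl⟩ ⟨t', h⟩
    rw [(index m l).apply_eq_iff_eq, Prod.mk.injEq] at h
    exact hjk h.1.symm
  · simp [fn_eq_true_iff, term]

lemma tree_computes : (tree m l).Computes (fn m l) := by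
  intro x
  rw [tree, DecTree.eval_ofDNF, Bool.eq_iff_iff, fn_eq_true_iff]
  simp [termList]

lemma nodup_flatten_termList : ((List.finRange m).map (termList m l)).flatten.Nodup := by
  rw [← List.flatMap_def, List.nodup_flatMap]
  refine ⟨fun j _ => (List.nodup_finRange l).map fun t t' h => by simpa using h,
    (List.nodup_finRange m).pairwise_of_forall_ne fun j _ j' _ hjj' i hi hi' => ?_⟩
  simp only [termList, List.mem_map, List.mem_finRange, true_and] at hi hi'
  obtain ⟨t, rfl⟩ := hi
  obtain ⟨t', h⟩ := hi'
  rw [(index m l).apply_eq_iff_eq, Prod.mk.injEq] at h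
  exact hjj' h.1.symm

lemma OPTA_le : OPTA (l * m) (fn m l) (cost m l) (fun _ => 1/2) ≤ l * m := by
  have hc : ∀ i, 0 ≤ cost m l i := fun i => (cost_pos i).le
  refine (OPTA_le_adExpCost hc (fun _ => by norm_num) tree_computes).trans ?_
  refine (DecTree.adExpCost_ofDNF_le hc nodup_flatten_termList).trans_eq ?_
  simp [termList, Function.comp_def, halvingSum_two_pow, mul_comm]

def block (x : Fin (l * m) → Bool) (j : Fin m) : Fin l → Bool := fun t => x (index m l (j, t))

def nearMisses (S : Finset (Fin m)) (pat : Fin m → Fin l → Bool) :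
    Finset (Fin (l * m) → Bool) :=
  {x | (∀ j, block x j ≠ fun _ => true) ∧ ∃ j ∈ S, block x j = pat j}

lemma card_filter_forall_block (P : Fin m → (Fin l → Bool) → Prop)
    [∀ j, DecidablePred (P j)] :
    #{x : Fin (l * m) → Bool | ∀ j, P j (block x j)} = ∏ j, #{y | P j y} := by
  rw [← Fintype.card_piFinset]
  exact card_equiv (((index m l).arrowCongr (Equiv.refl Bool)).symm.trans (Equiv.curry _ _ _))
    fun x => by simp [Fintype.mem_piFinset]; rfl

lemma card_ne_true : (#{y : Fin l → Bool | y ≠ fun _ => true} : ℝ) = 2 ^ l - 1 := by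
  rw [filter_ne', card_erase_of_mem (mem_univ _), Nat.cast_sub (card_pos.mpr univ_nonempty)]
  simp

lemma card_ne_true_ne {b : Fin l → Bool} (hb : b ≠ fun _ => true) :
    (#{y : Fin l → Bool | y ≠ (fun _ => true) ∧ y ≠ b} : ℝ) = 2 ^ l - 2 := by
  rw [← filter_filter, filter_ne', filter_ne', card_erase_of_mem (by simpa using hb),
    card_erase_of_mem (mem_univ _), Nat.cast_sub, Nat.cast_sub (card_pos.mpr univ_nonempty)]
  · simp; ring
  · have := one_lt_card.mpr ⟨b, mem_univ _, _, mem_univ _, hb⟩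
    omega

/-- With `q = 2⁻ˡ`, `nearMisses S pat` has probability
`(1 - q)^(2^l) - (1 - 2q)^#S (1 - q)^(2^l - #S)`. -/
lemma card_event_ge (hl : 2 ≤ l) {S : Finset (Fin (2 ^ l))} (hS : #S = 2 ^ (l - 1))
    {pat : Fin (2 ^ l) → Fin l → Bool} (hpat : ∀ j, pat j ≠ fun _ => true) :
    (2 : ℝ) ^ (l * 2 ^ l) / 32 ≤ #(nearMisses S pat) := by
  set k := 2 ^ (l - 2)
  have h4 : 2 ^ l = 4 * k := by rw [show 4 = 2 ^ 2 from rfl, ← pow_add]; congr 1; omega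
  have h2 : 2 ^ (l - 1) = 2 * k := by rw [← pow_succ']; congr 1; omega
  have hSc : #Sᶜ = 2 * k := by rw [card_compl, Fintype.card_fin, hS]; omega
  set A : Finset (Fin (l * 2 ^ l) → Bool) := {x | ∀ j, block x j ≠ fun _ => true}
  set B : Finset (Fin (l * 2 ^ l) → Bool) :=
    {x | ∀ j, block x j ≠ (fun _ => true) ∧ (j ∈ S → block x j ≠ pat j)}
  have hAB : B ⊆ A := fun x => by
    simp only [A, B, mem_filter, mem_univ, true_and]
    exact fun h j => (h j).1
  have hE : nearMisses S pat = A \ B := by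
    ext x; simp only [nearMisses, A, B, mem_sdiff, mem_filter, mem_univ, true_and]; grind
  have hA : (#A : ℝ) = (2 ^ l - 1) ^ (2 ^ l) := by
    rw [card_filter_forall_block (fun _ y => y ≠ fun _ => true), Nat.cast_prod]
    simp only [card_ne_true, prod_const, card_univ, Fintype.card_fin]
  have hB : (#B : ℝ) = (2 ^ l - 2) ^ #S * (2 ^ l - 1) ^ #Sᶜ := by
    rw [card_filter_forall_block (fun j y => y ≠ (fun _ => true) ∧ (j ∈ S → y ≠ pat j)),
      Nat.cast_prod, ← prod_ite_mem_eq_pow_mul_pow]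
    refine prod_congr rfl fun j _ => ?_
    split_ifs with hj
    · simp only [hj, forall_const, card_ne_true_ne (hpat j)]
    · simp only [hj, IsEmpty.forall_iff, and_true, card_ne_true]
  rw [hE, card_sdiff_of_subset hAB, Nat.cast_sub (card_le_card hAB), hA, hB, hS, hSc, h2,
    pow_mul, h4, show (2 : ℝ) ^ l = 4 * k by exact_mod_cast h4]
  exact pow_sub_pow_mul_pow_ge k Nat.one_le_two_pow

lemma sum_cost_term_ge (hl : 1 ≤ l) (j : Fin m) :
    (2 : ℝ) ^ (l - 1) ≤ ∑ i ∈ term m l j, cost m l i := by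
  have h := single_le_sum (fun i _ => (cost_pos i).le) (mem_image_of_mem (fun t => index m l (j, t))
    (mem_univ (⟨l - 1, by omega⟩ : Fin l)))
  simpa [term] using h

lemma card_mul_le_naCost (hl : 1 ≤ l) {π : Equiv.Perm (Fin (l * m))} {x : Fin (l * m) → Bool}
    {i : Fin (l * m)} {b : Bool} (h : fn m l (Function.update x i b) ≠ fn m l x)
    {R : Finset (Fin m)} (hR : ∀ j ∈ R, ∀ t, π.symm (index m l (j, t)) ≤ π.symm i) :
    #R * (2 : ℝ) ^ (l - 1) ≤ naCost (l * m) (fn m l) (cost m l) π x := by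
  have hc : ∀ i, 0 ≤ cost m l i := fun i => (cost_pos i).le
  calc #R * (2 : ℝ) ^ (l - 1) ≤ ∑ j ∈ R, ∑ i' ∈ term m l j, cost m l i' := by
        rw [← nsmul_eq_mul]; exact card_nsmul_le_sum _ _ _ fun j _ => sum_cost_term_ge hl j
    _ = ∑ i' ∈ R.biUnion (term m l), cost m l i' :=
        (sum_biUnion fun j _ j' _ hjj' => (isReadOnceDNF hl).2.1 j j' hjj').symm
    _ ≤ ∑ i' with π.symm i' ≤ π.symm i, cost m l i' := by
        refine sum_le_sum_of_subset_of_nonneg (fun i' hi' => ?_) fun i' _ _ => hc i'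
        obtain ⟨j, hj, t, -, rfl⟩ : ∃ j ∈ R, ∃ t ∈ univ, index m l (j, t) = i' := by
          simpa [term] using hi'
        exact mem_filter.mpr ⟨mem_univ _, hR j hj t⟩
    _ ≤ naCost (l * m) (fn m l) (cost m l) π x := sum_le_naCost_of_update_ne hc h

lemma naExpCost_ge (hl : 2 ≤ l) (π : Equiv.Perm (Fin (l * 2 ^ l))) :
    (4 : ℝ) ^ l / 128 ≤ naExpCost _ (fn (2 ^ l) l) (cost (2 ^ l) l) (fun _ => 1/2) π := by
  have : Nonempty (Fin l) := ⟨⟨0, by omega⟩⟩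
  choose last hlast using fun j : Fin (2 ^ l) =>
    Finite.exists_max fun t => π.symm (index _ l (j, t))
  obtain ⟨S, -, hS, hlate⟩ := exists_subset_card_eq_forall_sdiff_le
    (fun j => π.symm (index _ l (j, last j))) (2 ^ (l - 1)) univ
    (by simpa using Nat.pow_le_pow_right two_pos (Nat.sub_le l 1))
  have hSc : #Sᶜ = 2 ^ (l - 1) := by
    rw [card_compl, Fintype.card_fin, hS, ← Nat.two_pow_pred_add_two_pow_pred (by omega : 0 < l)]
    simp
  let pat : Fin (2 ^ l) → Fin l → Bool := fun j t => decide (t ≠ last j)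
  have hpat : ∀ j, pat j ≠ fun _ => true := fun j h => by simpa [pat] using congrFun h (last j)
  set E := nearMisses S pat
  have hcost : ∀ x ∈ E, (4 : ℝ) ^ l / 4 ≤ naCost _ (fn _ l) (cost _ l) π x := by
    intro x hx
    obtain ⟨hfalse, j, hjS, hj⟩ := (mem_filter.mp hx).2
    have hfx : fn _ l x = false := by
      rw [← Bool.not_eq_true, fn_eq_true_iff]
      exact fun ⟨j', hj'⟩ => hfalse j' (funext hj')
    have hfy : fn _ l (Function.update x (index _ l (j, last j)) true) = true := by
      refine fn_eq_true_iff.mpr ⟨j, fun t => ?_⟩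
      by_cases ht : t = last j
      · simp [ht]
      · rw [Function.update_of_ne (by simp [ht])]
        simpa [block, pat, ht] using congrFun hj t
    have hflip : fn _ l (Function.update x (index _ l (j, last j)) true) ≠ fn _ l x := by
      rw [hfx, hfy]; decide
    have h := card_mul_le_naCost (by omega) hflip (R := Sᶜ) fun j' hj' t =>
      (hlast j' t).trans (hlate j hjS j' (by simpa using hj'))
    rw [hSc, Nat.cast_pow, Nat.cast_two, ← mul_pow] at h
    rwa [← pow_sub_one_mul (by omega : l ≠ 0), mul_div_cancel_right₀ _ four_ne_zero,
      show (4 : ℝ) = 2 * 2 by norm_num]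
  have hsum : #E * ((4 : ℝ) ^ l / 4) ≤ ∑ x, naCost _ (fn _ l) (cost _ l) π x := by
    rw [← nsmul_eq_mul]
    refine (card_nsmul_le_sum _ _ _ hcost).trans
      (sum_le_sum_of_subset_of_nonneg (subset_univ E) fun x _ _ => ?_)
    exact sum_nonneg fun i _ => (cost_pos i).le
  rw [naExpCost_uniform, le_div_iff₀ (by positivity)]
  calc (4 : ℝ) ^ l / 128 * 2 ^ (l * 2 ^ l) = 2 ^ (l * 2 ^ l) / 32 * (4 ^ l / 4) := by ring
    _ ≤ #E * (4 ^ l / 4) := by gcongr; exact card_event_ge hl hS hpat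
    _ ≤ _ := hsum

end Tribes

lemma exists_sq_le_two_pow_rpow {ε : ℝ} (hε : 0 < ε) :
    ∃ L : ℕ, ∀ l ≥ L, (l : ℝ) ^ 2 ≤ ((2 : ℝ) ^ l) ^ ε := by
  have h := (isLittleO_pow_const_const_pow_of_one_lt (R := ℝ) 2
    (Real.one_lt_rpow one_lt_two hε)).eventuallyLE
  obtain ⟨L, hL⟩ := Filter.eventually_atTop.mp h
  refine ⟨L, fun l hl => ?_⟩
  have := hL l hl
  rwa [Real.norm_of_nonneg (by positivity), Real.norm_of_nonneg (by positivity),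
    Real.rpow_pow_comm zero_le_two] at this

lemma rpow_one_sub_div_logb_mul_le {X A Y ε : ℝ} (hX : 2 ≤ X) (hA : A ≤ X) (hY : 0 < Y)
    (hYX : Y ≤ X ^ ε) :
    X ^ (1 - ε) / Real.logb 2 X * A ≤ X ^ 2 / Y := by
  have hX0 : 0 < X := by linarith
  have hlog : 1 ≤ Real.logb 2 X :=
    (Real.le_logb_iff_rpow_le one_lt_two hX0).mpr (by simpa using hX)
  have hpow : X ^ (1 - ε) ≤ X / Y := by
    rw [Real.rpow_sub hX0, Real.rpow_one]
    exact div_le_div_of_nonneg_left hX0.le hY hYX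
  have hcoef : 0 ≤ X ^ (1 - ε) / Real.logb 2 X := by positivity
  calc X ^ (1 - ε) / Real.logb 2 X * A ≤ X ^ (1 - ε) / Real.logb 2 X * X :=
        mul_le_mul_of_nonneg_left hA hcoef
    _ ≤ X ^ (1 - ε) * X := by gcongr; exact div_le_self (by positivity) hlog
    _ ≤ X / Y * X := by gcongr
    _ = X ^ 2 / Y := by ring

/-- There is a constant `K > 0` such that for every `ε > 0` there exists `N_ε` such that
for every `ℓ ≥ 1` with `n := ℓ·2^ℓ > N_ε` there are a monotone read-once DNF `f` on `n`
variables consisting of `2^ℓ` pairwise-disjoint terms of `ℓ` variables each, and a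
positive cost vector `c`, such that under the uniform distribution
`OPT_N(f,c) ≥ K·(n^{1-ε}/log₂ n)·OPT_A(f,c)`. -/
theorem stmt6 :
    ∃ K : ℝ, 0 < K ∧
      ∀ ε : ℝ, 0 < ε →
        ∃ N : ℕ, ∀ l : ℕ, 1 ≤ l → N < l * 2 ^ l →
          ∃ (f : (Fin (l * 2 ^ l) → Bool) → Bool)
            (T : Fin (2 ^ l) → Finset (Fin (l * 2 ^ l)))
            (c : Fin (l * 2 ^ l) → ℝ),
            (∀ j, (T j).card = l) ∧
            IsReadOnceDNF (l * 2 ^ l) (2 ^ l) T f ∧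
            (∀ i, 0 < c i) ∧
            K * (((l * 2 ^ l : ℕ) : ℝ) ^ (1 - ε) / Real.logb 2 (l * 2 ^ l)) *
                OPTA (l * 2 ^ l) f c (fun _ => 1/2) ≤
              OPTN (l * 2 ^ l) f c (fun _ => 1/2) := by
  refine ⟨1 / 128, by norm_num, fun ε hε => ?_⟩
  obtain ⟨L, hL⟩ := exists_sq_le_two_pow_rpow hε
  refine ⟨max L 2 * 2 ^ max L 2, fun l hl1 hn => ?_⟩
  have hlL : max L 2 < l :=
    lt_of_not_ge fun h => hn.not_ge (Nat.mul_le_mul h (Nat.pow_le_pow_right two_pos h))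
  refine ⟨Tribes.fn _ l, Tribes.term _ l, Tribes.cost _ l, Tribes.card_term,
    Tribes.isReadOnceDNF hl1, Tribes.cost_pos, ?_⟩
  have hl0 : (1 : ℝ) ≤ l := by exact_mod_cast hl1
  have hpow : (2 : ℝ) ≤ 2 ^ l := by simpa using pow_le_pow_right₀ one_le_two hl1
  have hA : OPTA _ (Tribes.fn (2 ^ l) l) (Tribes.cost _ l) (fun _ => 1 / 2) ≤ l * 2 ^ l := by
    simpa using Tribes.OPTA_le (m := 2 ^ l) (l := l)
  have hY : (l : ℝ) ^ 2 ≤ (l * 2 ^ l) ^ ε :=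
    (hL l (by omega)).trans (Real.rpow_le_rpow (by positivity) (by nlinarith) hε.le)
  have hratio := rpow_one_sub_div_logb_mul_le (by nlinarith) hA (by positivity) hY
  push_cast
  rw [mul_assoc]
  calc _ ≤ 1 / 128 * (((l : ℝ) * 2 ^ l) ^ 2 / l ^ 2) := by gcongr
    _ = 4 ^ l / 128 := by rw [show (4 : ℝ) = 2 ^ 2 by norm_num, ← pow_mul]; field_simp; ring
    _ ≤ _ := le_OPTN (Tribes.naExpCost_ge (by omega))
end
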